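/- arXiv:1505.07203 — 7 statements merged into one kernel-verified Lean document; each statement's English description precedes it below -/
import Mathlib

section
/- Let G = (V,E) be a finite connected graph. The map Φ sending a hierarchy to its saliency map is a one-to-one correspondence between the connected complete hierarchies on V of depth |E| and the saliency maps with range {0,…,|E|−1}; its inverse sends a saliency map w to the quasi-flat zones hierarchy QFZ(G,w). -/
open SimpleGraph

variable {V : Type*}

/-- `P'` refines `P`: every region of `P'` is contained in a region of `P`. -/
def Refines (P' P : Set (Set V)) : Prop := ∀ R ∈ P', ∃ S ∈ P, R ⊆ S

/-- `x` and `y` lie in the same region of `P`. -/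
def SameRegion (P : Set (Set V)) (x y : V) : Prop := ∃ R ∈ P, x ∈ R ∧ y ∈ R

/-- The cut of a partition `P` for the graph `G`. -/
def cutOf (G : SimpleGraph V) (P : Set (Set V)) : Set (Sym2 V) :=
  {e | e ∈ G.edgeSet ∧ ∀ x y : V, e = s(x, y) → ¬ SameRegion P x y}

/-- The `lam`-level partition of a subgraph `X`: connected components of the
`lam`-level graph `(V(X), {u ∈ E(X) : w u < lam})`, as a set of regions. -/
def levelPartition {G : SimpleGraph V} (X : G.Subgraph) {α : Type*} [LT α]
    (w : Sym2 V → α) (lam : α) : Set (Set V) :=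
  {S | ∃ x ∈ X.verts,
    S = {y | Relation.ReflTransGen (fun a b => X.Adj a b ∧ w s(a, b) < lam) x y}}

/-- The `lam`-level partition of the graph `G` itself (quasi-flat zones at level `lam`). -/
def qfz (G : SimpleGraph V) (w : Sym2 V → ℕ) (lam : ℕ) : Set (Set V) :=
  {S | ∃ x : V,
    S = {y | Relation.ReflTransGen (fun a b => G.Adj a b ∧ w s(a, b) < lam) x y}}

/-- `(P₀, …, P_l)` is a complete hierarchy on `V`. -/
def IsCompleteHierarchy (P : ℕ → Set (Set V)) (l : ℕ) : Prop :=
  (∀ i ≤ l, Setoid.IsPartition (P i)) ∧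
  (∀ i, 1 ≤ i → i ≤ l → Refines (P (i - 1)) (P i)) ∧
  (P 0 = {S | ∃ x : V, S = {x}}) ∧
  (P l = {Set.univ})

/-- A complete hierarchy all of whose regions induce connected subgraphs of `G`. -/
def IsConnectedHierarchy (G : SimpleGraph V) (P : ℕ → Set (Set V)) (l : ℕ) : Prop :=
  IsCompleteHierarchy P l ∧ ∀ i ≤ l, ∀ S ∈ P i, (G.induce S).Connected

/-- The saliency map of the hierarchy `(P₀, …, P_l)`:
`Φ(H)(u) = max {lam ≤ l : u ∈ φ(P lam)}`. -/
noncomputable def saliency (G : SimpleGraph V) (P : ℕ → Set (Set V)) (l : ℕ)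
    (e : Sym2 V) : ℕ :=
  sSup {lam | lam ≤ l ∧ e ∈ cutOf G (P lam)}

/-- `w` is a saliency map on `G`: the saliency map of some connected complete
hierarchy of depth `|E|`. -/
def IsSaliencyMap (G : SimpleGraph V) [Fintype G.edgeSet] (w : Sym2 V → ℕ) : Prop :=
  ∃ P : ℕ → Set (Set V), IsConnectedHierarchy G P G.edgeFinset.card ∧
    ∀ e ∈ G.edgeSet, w e = saliency G P G.edgeFinset.card e

/-- Total weight of a subgraph. -/
noncomputable def sgWeight [Fintype V] {G : SimpleGraph V} {α : Type*}
    [AddCommMonoid α] (X : G.Subgraph) (w : Sym2 V → α) : α :=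
  ∑ e ∈ (Set.toFinite X.edgeSet).toFinset, w e

/-- `X` is a minimum spanning tree of `(G, w)`. -/
def IsMST [Fintype V] {G : SimpleGraph V} {α : Type*} [AddCommMonoid α] [Preorder α]
    (X : G.Subgraph) (w : Sym2 V → α) : Prop :=
  X.verts = Set.univ ∧ X.Connected ∧
  ∀ Y : G.Subgraph, Y.verts = Set.univ → Y.Connected → sgWeight X w ≤ sgWeight Y w

-- ### auxiliary lemmas

lemma sameRegion_symm {P : Set (Set V)} {x y : V} (h : SameRegion P x y) :
    SameRegion P y x := by
  obtain ⟨R, hR, hx, hy⟩ := h; exact ⟨R, hR, hy, hx⟩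

lemma sameRegion_mono {P' P : Set (Set V)} (h : Refines P' P) {x y : V}
    (hxy : SameRegion P' x y) : SameRegion P x y := by
  obtain ⟨R, hR, hx, hy⟩ := hxy
  obtain ⟨S, hS, hde⟩ := h R hR
  exact ⟨S, hS, hde hx, hde hy⟩

lemma refines_of_le {P : ℕ → Set (Set V)} {l : ℕ} (hH : IsCompleteHierarchy P l)
    {i j : ℕ} (hij : i ≤ j) (hj : j ≤ l) : Refines (P i) (P j) := by
  induction j with
  | zero => interval_cases i; exact fun R hR => ⟨R, hR, subset_rfl⟩
  | succ n ih =>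
    rcases Nat.lt_or_ge i (n+1) with h | h
    · have h1 : Refines (P i) (P n) := ih (Nat.lt_succ_iff.mp h) (le_trans (Nat.le_succ n) hj)
      have h2 : Refines (P n) (P (n+1)) := by
        have := hH.2.1 (n+1) (Nat.succ_le_succ (Nat.zero_le n)) hj
        simpa using this
      intro R hR
      obtain ⟨S, hS, h1'⟩ := h1 R hR
      obtain ⟨T, hT, h2'⟩ := h2 S hS
      exact ⟨T, hT, h1'.trans h2'⟩
    · have : i = n + 1 := le_antisymm hij h
      subst this; exact fun R hR => ⟨R, hR, subset_rfl⟩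

lemma cut_antitone {G : SimpleGraph V} {P : ℕ → Set (Set V)} {l : ℕ}
    (hH : IsCompleteHierarchy P l) {i j : ℕ} (hij : i ≤ j) (hj : j ≤ l) :
    cutOf G (P j) ⊆ cutOf G (P i) := by
  intro e he
  refine ⟨he.1, fun x y hxy hsame => ?_⟩
  exact he.2 x y hxy (sameRegion_mono (refines_of_le hH hij hj) hsame)

lemma mem_cut_zero {G : SimpleGraph V} {P : ℕ → Set (Set V)} {l : ℕ}
    (hH : IsCompleteHierarchy P l) {e : Sym2 V} (he : e ∈ G.edgeSet) :
    e ∈ cutOf G (P 0) := by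
  refine ⟨he, fun x y hxy hsame => ?_⟩
  obtain ⟨R, hR, hx, hy⟩ := hsame
  rw [hH.2.2.1] at hR
  obtain ⟨z, rfl⟩ := hR
  have hadj : G.Adj x y := by rw [hxy] at he; exact he
  exact hadj.ne (hx.trans hy.symm)

lemma saliency_lt_iff {G : SimpleGraph V} {P : ℕ → Set (Set V)} {l : ℕ}
    (hH : IsCompleteHierarchy P l) {e : Sym2 V} (he : e ∈ G.edgeSet)
    {lam : ℕ} (hlam : lam ≤ l) :
    saliency G P l e < lam ↔ e ∉ cutOf G (P lam) := by
  set S : Set ℕ := {μ | μ ≤ l ∧ e ∈ cutOf G (P μ)} with hS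
  have hne : S.Nonempty := ⟨0, Nat.zero_le l, mem_cut_zero hH he⟩
  have hbdd : BddAbove S := ⟨l, fun μ hμ => hμ.1⟩
  have hmem : sSup S ∈ S := Nat.sSup_mem hne hbdd
  constructor
  · intro h hmem'
    exact absurd (le_csSup hbdd ⟨hlam, hmem'⟩) (not_le.mpr h)
  · intro h
    by_contra hle
    push_neg at hle
    exact h (cut_antitone hH hle hmem.1 hmem.2)

lemma not_mem_cut_iff {G : SimpleGraph V} {Q : Set (Set V)} {x y : V}
    (he : s(x, y) ∈ G.edgeSet) :
    s(x, y) ∉ cutOf G Q ↔ SameRegion Q x y := by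
  constructor
  · intro h
    simp only [cutOf, Set.mem_setOf_eq, not_and, not_forall] at h
    obtain ⟨a, b, hab, hsame⟩ := h he
    rw [Sym2.eq_iff] at hab
    rcases hab with ⟨rfl, rfl⟩ | ⟨rfl, rfl⟩
    · exact not_not.mp hsame
    · exact sameRegion_symm (not_not.mp hsame)
  · intro hsame h
    exact h.2 x y rfl hsame

/-- Core partition lemma: if the level relation agrees with same-region and
regions are connected, the level classes are exactly the regions. -/
lemma qfz_eq_of_edge_iff {G : SimpleGraph V} {w : Sym2 V → ℕ} {lam : ℕ}
    {Q : Set (Set V)} (hpart : Setoid.IsPartition Q)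
    (hconn : ∀ S ∈ Q, (G.induce S).Connected)
    (hedge : ∀ a b : V, G.Adj a b → (w s(a, b) < lam ↔ SameRegion Q a b)) :
    qfz G w lam = Q := by
  have key : ∀ (x : V) (S : Set V), S ∈ Q → x ∈ S →
      {y | Relation.ReflTransGen (fun a b => G.Adj a b ∧ w s(a, b) < lam) x y} = S := by
    intro x S hS hx
    apply Set.eq_of_subset_of_subset
    · intro y hy
      simp only [Set.mem_setOf_eq] at hy
      induction hy with
      | refl => exact hx
      | tail _ hab ih =>
        rename_i b c _
        have hsame : SameRegion Q b c := (hedge b c hab.1).mp hab.2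
        obtain ⟨R, hR, hbR, hcR⟩ := hsame
        obtain ⟨T, ⟨hTQ, hbT⟩, huniq⟩ := hpart.2 b
        have h1 : R = T := huniq R ⟨hR, hbR⟩
        have h2 : S = T := huniq S ⟨hS, ih⟩
        rw [h2, ← h1]; exact hcR
    · intro y hy
      have hreach : (G.induce S).Reachable ⟨x, hx⟩ ⟨y, hy⟩ :=
        (hconn S hS).preconnected ⟨x, hx⟩ ⟨y, hy⟩
      obtain ⟨p⟩ := hreach
      simp only [Set.mem_setOf_eq]
      have wk : ∀ (u v : ↑S), (G.induce S).Walk u v →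
          Relation.ReflTransGen (fun a b => G.Adj a b ∧ w s(a, b) < lam) u.1 v.1 := by
        intro u v q
        clear p
        induction q with
        | nil => exact Relation.ReflTransGen.refl
        | cons h p ih =>
          rename_i a b c
          have hadj : G.Adj a.1 b.1 := h
          have : w s(a.1, b.1) < lam :=
            (hedge a.1 b.1 hadj).mpr ⟨S, hS, a.2, b.2⟩
          exact Relation.ReflTransGen.head ⟨hadj, this⟩ ih
      exact wk ⟨x, hx⟩ ⟨y, hy⟩ p
  apply Set.eq_of_subset_of_subset
  · rintro S ⟨x, rfl⟩
    obtain ⟨T, ⟨hTQ, hxT⟩, _⟩ := hpart.2 x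
    rw [key x T hTQ hxT]; exact hTQ
  · intro S hS
    have hne : S ≠ ∅ := fun h => hpart.1 (h ▸ hS)
    obtain ⟨x, hx⟩ := Set.nonempty_iff_ne_empty.mpr hne
    exact ⟨x, (key x S hS hx).symm⟩

/-- Main lemma: QFZ of a function agreeing with the saliency map on edges
recovers the hierarchy. -/
lemma qfz_eq_main {G : SimpleGraph V} {P : ℕ → Set (Set V)} {l : ℕ}
    (hP : IsConnectedHierarchy G P l) {w : Sym2 V → ℕ}
    (hw : ∀ e ∈ G.edgeSet, w e = saliency G P l e)
    {lam : ℕ} (hlam : lam ≤ l) : qfz G w lam = P lam := by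
  apply qfz_eq_of_edge_iff (hP.1.1 lam hlam) (hP.2 lam hlam)
  intro a b hab
  have he : s(a, b) ∈ G.edgeSet := hab
  rw [hw _ he, saliency_lt_iff hP.1 he hlam, not_mem_cut_iff he]

/-- `Φ` is a one-to-one correspondence between connected complete
hierarchies on `V` of depth `|E|` and saliency maps, whose inverse is `w ↦ QFZ(G, w)`:
the quasi-flat zones hierarchy of a saliency map is a connected hierarchy of depth `|E|`,
`QFZ(G, Φ(H)) = H`, and `Φ(QFZ(G, w)) = w` for every saliency map `w`. -/
theorem saliency_qfz_bijection [Fintype V] (G : SimpleGraph V) [Fintype G.edgeSet]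
    (hG : G.Connected) :
    (∀ w : Sym2 V → ℕ, IsSaliencyMap G w →
        IsConnectedHierarchy G (qfz G w) G.edgeFinset.card) ∧
    (∀ P : ℕ → Set (Set V), IsConnectedHierarchy G P G.edgeFinset.card →
        ∀ lam ≤ G.edgeFinset.card,
          qfz G (saliency G P G.edgeFinset.card) lam = P lam) ∧
    (∀ w : Sym2 V → ℕ, IsSaliencyMap G w →
        ∀ e ∈ G.edgeSet, saliency G (qfz G w) G.edgeFinset.card e = w e) := by
  set m := G.edgeFinset.card with hm
  refine ⟨?_, ?_, ?_⟩
  · rintro w ⟨P, hP, hwP⟩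
    have key : ∀ lam ≤ m, qfz G w lam = P lam := fun lam h => qfz_eq_main hP hwP h
    refine ⟨⟨fun i hi => key i hi ▸ hP.1.1 i hi, fun i h1 hi => ?_,
      key 0 (Nat.zero_le m) ▸ hP.1.2.2.1, key m le_rfl ▸ hP.1.2.2.2⟩,
      fun i hi => key i hi ▸ hP.2 i hi⟩
    rw [key (i - 1) (le_trans (Nat.sub_le i 1) hi), key i hi]
    exact hP.1.2.1 i h1 hi
  · intro P hP lam hlam
    exact qfz_eq_main hP (fun e _ => rfl) hlam
  · rintro w ⟨P, hP, hwP⟩ e he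
    have key : ∀ lam ≤ m, qfz G w lam = P lam := fun lam h => qfz_eq_main hP hwP h
    have heq : saliency G (qfz G w) m e = saliency G P m e := by
      unfold saliency
      congr 1
      ext lam
      simp only [Set.mem_setOf_eq]
      exact and_congr_right fun h => by rw [key lam h]
    rw [heq, ← hwP e he]
end

section
/- For any saliency map w on a finite connected graph G, the saliency map of the quasi-flat zones hierarchy of (G,w) is w itself: Φ(QFZ(G,w)) = w. -/
open SimpleGraph

variable {V : Type*}

/-!
An edge `s(x, y)` lies in the cut of the `λ`-th quasi-flat zones exactly when no path of edges
of weight `< λ` joins `x` and `y`; a single edge shows `Φ(QFZ(G, w)) ≤ w`. Conversely, let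
`μ = w(x, y) = Φ(H)(x, y)`, so that for `μ > 0` the edge lies in the cut of `P_μ`. Every edge of weight
`< μ` lies inside a region of `P_μ` (otherwise its saliency would be at least `μ`), so a path of
such edges would put `x` and `y` in one region of `P_μ`; hence `s(x, y)` is in the cut of the
`μ`-th quasi-flat zones.
-/

namespace SameRegion

variable {P : Set (Set V)} {x y z : V}

lemma symm (h : SameRegion P x y) : SameRegion P y x :=
  let ⟨R, hR, hx, hy⟩ := h
  ⟨R, hR, hy, hx⟩

lemma refl (hP : Setoid.IsPartition P) (x : V) : SameRegion P x x :=
  let ⟨R, ⟨hR, hx⟩, _⟩ := hP.2 x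
  ⟨R, hR, hx, hx⟩

lemma trans (hP : Setoid.IsPartition P) (hxy : SameRegion P x y) (hyz : SameRegion P y z) :
    SameRegion P x z := by
  obtain ⟨R, hR, hx, hy⟩ := hxy
  obtain ⟨S, hS, hy', hz⟩ := hyz
  obtain ⟨T, -, hT⟩ := hP.2 y
  rw [hT R ⟨hR, hy⟩, ← hT S ⟨hS, hy'⟩] at hx
  exact ⟨S, hS, hx, hz⟩

lemma of_reflTransGen {r : V → V → Prop} (hP : Setoid.IsPartition P)
    (hr : ∀ a b, r a b → SameRegion P a b) (h : Relation.ReflTransGen r x y) :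
    SameRegion P x y := by
  induction h with
  | refl => exact refl hP x
  | tail _ hbc ih => exact ih.trans hP (hr _ _ hbc)

end SameRegion

lemma mem_cutOf_mk_iff {G : SimpleGraph V} {P : Set (Set V)} {x y : V} :
    s(x, y) ∈ cutOf G P ↔ G.Adj x y ∧ ¬ SameRegion P x y := by
  refine ⟨fun h => ⟨h.1, h.2 x y rfl⟩, fun ⟨hxy, hn⟩ => ⟨hxy, fun a b hab hab' => ?_⟩⟩
  rcases Sym2.eq_iff.mp hab with ⟨rfl, rfl⟩ | ⟨rfl, rfl⟩
  exacts [hn hab', hn hab'.symm]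

section Saliency

variable {G : SimpleGraph V} {P : ℕ → Set (Set V)} {l lam : ℕ} {e : Sym2 V}

lemma saliency_le : saliency G P l e ≤ l :=
  csSup_le' fun _ h => h.1

lemma le_saliency (hlam : lam ≤ l) (he : e ∈ cutOf G (P lam)) : lam ≤ saliency G P l e :=
  le_csSup ⟨l, fun _ h => h.1⟩ ⟨hlam, he⟩

lemma mem_cutOf_saliency (h : saliency G P l e ≠ 0) : e ∈ cutOf G (P (saliency G P l e)) := by
  have hne : {lam | lam ≤ l ∧ e ∈ cutOf G (P lam)}.Nonempty := by
    by_contra hempty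
    exact h (by rw [saliency, Set.not_nonempty_iff_eq_empty.mp hempty, csSup_empty]; rfl)
  exact (Nat.sSup_mem hne ⟨l, fun _ h => h.1⟩).2

lemma sameRegion_of_saliency_lt (hlam : lam ≤ l) {a b : V} (hab : G.Adj a b) (hlt : saliency G P l s(a, b) < lam) :
    SameRegion (P lam) a b := by
  by_contra hn
  exact hlt.not_ge (le_saliency hlam (mem_cutOf_mk_iff.mpr ⟨hab, hn⟩))

end Saliency

section QuasiFlatZones

variable {G : SimpleGraph V} {w : Sym2 V → ℕ} {lam : ℕ} {x y : V}

lemma sameRegion_qfz_iff :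
    SameRegion (qfz G w lam) x y ↔
      Relation.ReflTransGen (fun a b => G.Adj a b ∧ w s(a, b) < lam) x y := by
  have : Std.Symm fun a b => G.Adj a b ∧ w s(a, b) < lam :=
    ⟨fun a b ⟨hab, hw⟩ => ⟨hab.symm, Sym2.eq_swap (a := a) ▸ hw⟩⟩
  constructor
  · rintro ⟨R, ⟨z, rfl⟩, hx, hy⟩
    exact (Std.Symm.symm _ _ hx).trans hy
  · exact fun h => ⟨_, ⟨x, rfl⟩, Relation.ReflTransGen.refl, h⟩

lemma le_of_mem_cutOf_qfz (h : s(x, y) ∈ cutOf G (qfz G w lam)) : lam ≤ w s(x, y) := by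
  rw [mem_cutOf_mk_iff, sameRegion_qfz_iff] at h
  by_contra! hlt
  exact h.2 (.single ⟨h.1, hlt⟩)

lemma mem_cutOf_qfz_self {P : ℕ → Set (Set V)} {l : ℕ}
    (hP : ∀ i ≤ l, Setoid.IsPartition (P i))
    (hw : ∀ e ∈ G.edgeSet, w e = saliency G P l e) (hxy : G.Adj x y) :
    s(x, y) ∈ cutOf G (qfz G w (w s(x, y))) := by
  rw [mem_cutOf_mk_iff, sameRegion_qfz_iff]
  refine ⟨hxy, fun h => ?_⟩
  obtain hw0 | hw0 := eq_or_ne (w s(x, y)) 0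
  · rcases h.cases_head with rfl | ⟨_, ⟨_, hlt⟩, _⟩
    exacts [hxy.ne rfl, by omega]
  rw [hw _ hxy] at h hw0
  have hl : saliency G P l s(x, y) ≤ l := saliency_le
  refine (mem_cutOf_mk_iff.mp (mem_cutOf_saliency hw0)).2 (.of_reflTransGen (hP _ hl) ?_ h)
  rintro a b ⟨hab, hlt⟩
  exact sameRegion_of_saliency_lt hl hab (hw s(a, b) hab ▸ hlt)

end QuasiFlatZones

theorem saliency_qfz_eq_general (G : SimpleGraph V) [Fintype G.edgeSet]
    (w : Sym2 V → ℕ) (hw : IsSaliencyMap G w) :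
    ∀ e ∈ G.edgeSet, saliency G (qfz G w) G.edgeFinset.card e = w e := by
  obtain ⟨P, ⟨⟨hP, -⟩, -⟩, hsal⟩ := hw
  intro e he
  induction e using Sym2.ind with
  | _ x y =>
  have hle : w s(x, y) ≤ G.edgeFinset.card := (hsal _ he).trans_le saliency_le
  exact IsGreatest.csSup_eq
    ⟨⟨hle, mem_cutOf_qfz_self hP hsal he⟩, fun _ h => le_of_mem_cutOf_qfz h.2⟩

/-- `Φ(QFZ(G, w)) = w` for any saliency map `w`. -/
theorem saliency_qfz_eq [Fintype V] (G : SimpleGraph V) [Fintype G.edgeSet]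
    (hG : G.Connected) (w : Sym2 V → ℕ) (hw : IsSaliencyMap G w) :
    ∀ e ∈ G.edgeSet, saliency G (qfz G w) G.edgeFinset.card e = w e :=
  saliency_qfz_eq_general G w hw
end

section
/- Let G be a finite connected graph and w : E → {0,…,|E|−1}. The operator Ψ(w) = Φ(QFZ(G,w)) is anti-extensive: Ψ(w)(u) ≤ w(u) for every edge u of G. -/
open SimpleGraph

variable {V : Type*}

/-- the operator `Ψ = Φ ∘ QFZ(G, ·)` is anti-extensive. -/
theorem saliency_operator_antiextensive [Fintype V] (G : SimpleGraph V)
    [Fintype G.edgeSet] (hG : G.Connected) (w : Sym2 V → ℕ)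
    (hw : ∀ e ∈ G.edgeSet, w e < G.edgeFinset.card) :
    ∀ e ∈ G.edgeSet, saliency G (qfz G w) G.edgeFinset.card e ≤ w e := by
  intro e
  induction e using Sym2.ind with
  | _ x y =>
    intro he
    apply csSup_le'
    rintro lam ⟨-, -, hcut⟩
    by_contra hlt
    push_neg at hlt
    exact hcut x y rfl
      ⟨{z | Relation.ReflTransGen (fun a b => G.Adj a b ∧ w s(a, b) < lam) x z},
        ⟨x, rfl⟩, Relation.ReflTransGen.refl,
        Relation.ReflTransGen.single ⟨(G.mem_edgeSet).1 he, hlt⟩⟩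
end

section
/- Let G be a finite connected graph and w, w' : E → {0,…,|E|−1} with w' ≤ w pointwise. Then Ψ(w') ≤ Ψ(w) pointwise, where Ψ(w) = Φ(QFZ(G,w)); i.e., the saliency map operator is increasing. -/
open SimpleGraph

variable {V : Type*}

/-! Lowering the weights only adds edges to every level graph, so each level partition of `w'`
is coarser than the one of `w`. Hence every cut of `QFZ(G, w')` is a cut of `QFZ(G, w)`, and the
saliency, the largest level at which an edge is cut, can only increase. -/

theorem sameRegion_qfz_of_le {G : SimpleGraph V} {w w' : Sym2 V → ℕ}
    (hle : ∀ e ∈ G.edgeSet, w' e ≤ w e) {lam : ℕ} {x y : V}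
    (h : SameRegion (qfz G w lam) x y) : SameRegion (qfz G w' lam) x y := by
  obtain ⟨_, ⟨z, rfl⟩, hx, hy⟩ := h
  have hrel : ∀ a b, G.Adj a b ∧ w s(a, b) < lam → G.Adj a b ∧ w' s(a, b) < lam :=
    fun a b ⟨hab, hlt⟩ => ⟨hab, (hle _ hab).trans_lt hlt⟩
  exact ⟨_, ⟨z, rfl⟩, .mono hrel _ _ hx, .mono hrel _ _ hy⟩

theorem cutOf_qfz_subset_of_le {G : SimpleGraph V} {w w' : Sym2 V → ℕ}
    (hle : ∀ e ∈ G.edgeSet, w' e ≤ w e) (lam : ℕ) :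
    cutOf G (qfz G w' lam) ⊆ cutOf G (qfz G w lam) :=
  fun _ ⟨he, hcut⟩ => ⟨he, fun x y hxy hsame => hcut x y hxy (sameRegion_qfz_of_le hle hsame)⟩

theorem saliency_mono {G : SimpleGraph V} {P P' : ℕ → Set (Set V)} {l : ℕ}
    (hcut : ∀ lam ≤ l, cutOf G (P' lam) ⊆ cutOf G (P lam)) (e : Sym2 V) :
    saliency G P' l e ≤ saliency G P l e :=
  csSup_le_csSup' ⟨l, fun _ h => h.1⟩ fun lam ⟨hl, he⟩ => ⟨hl, hcut lam hl he⟩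

theorem saliency_operator_increasing_general (G : SimpleGraph V)
    [Fintype G.edgeSet] (w w' : Sym2 V → ℕ)
    (hle : ∀ e ∈ G.edgeSet, w' e ≤ w e) :
    ∀ e ∈ G.edgeSet,
      saliency G (qfz G w') G.edgeFinset.card e ≤
        saliency G (qfz G w) G.edgeFinset.card e :=
  fun e _ => saliency_mono (fun lam _ => cutOf_qfz_subset_of_le hle lam) e

/-- the operator `Ψ = Φ ∘ QFZ(G, ·)` is increasing. -/
theorem saliency_operator_increasing [Fintype V] (G : SimpleGraph V)
    [Fintype G.edgeSet] (hG : G.Connected) (w w' : Sym2 V → ℕ)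
    (hw : ∀ e ∈ G.edgeSet, w e < G.edgeFinset.card)
    (hw' : ∀ e ∈ G.edgeSet, w' e < G.edgeFinset.card)
    (hle : ∀ e ∈ G.edgeSet, w' e ≤ w e) :
    ∀ e ∈ G.edgeSet,
      saliency G (qfz G w') G.edgeFinset.card e ≤
        saliency G (qfz G w) G.edgeFinset.card e :=
  saliency_operator_increasing_general G w w' hle
end

section
/- Let (G,w) be a finite connected edge-weighted graph and X a minimum spanning tree of (G,w). Then for every λ, the connected-component partition of the λ-level graph of X equals the connected-component partition of the λ-level graph of G; consequently the quasi-flat zones hierarchies of X and of G coincide. -/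
/-!
If a `G`-edge `ab` of weight `< λ` joined two different `λ`-components of the MST `X`, follow an
`X`-path from `a` to `b` and let `uv` be the edge on which it leaves, for the last time, the
`λ`-component `S` of `a`. Then `w uv ≥ λ > w ab`, and replacing `uv` by `ab` keeps the subgraph
connected: `u` is joined to `a` inside `S` by light edges, hence not through `uv`, and `v` is
joined to `b` by the rest of the path, which stays outside `S`. The exchange is strictly lighter,
a contradiction. So every light edge of `G` is a light path of `X`, and the level relations agree.
-/

open SimpleGraph

variable {V : Type*}

theorem Relation.ReflTransGen.exists_last_exit {α : Type*} {r : α → α → Prop} {S : Set α}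
    {a b : α} (h : Relation.ReflTransGen r a b) (ha : a ∈ S) (hb : b ∉ S) :
    ∃ u v, u ∈ S ∧ v ∉ S ∧ r u v ∧
      Relation.ReflTransGen (fun p q => r p q ∧ p ∉ S ∧ q ∉ S) v b := by
  induction h with
  | refl => exact absurd ha hb
  | @tail c b _ hcb ih =>
    by_cases hc : c ∈ S
    · exact ⟨c, b, hc, hb, hcb, .refl⟩
    · obtain ⟨u, v, hu, hv, huv, hvc⟩ := ih hc
      exact ⟨u, v, hu, hv, huv, hvc.tail ⟨hcb, hc, hb⟩⟩

namespace SimpleGraph.Subgraph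

variable {G : SimpleGraph V}

theorem reachable_coe_iff_reflTransGen {Y : G.Subgraph} {a b : Y.verts} :
    Y.coe.Reachable a b ↔ Relation.ReflTransGen Y.Adj a b := by
  rw [reachable_iff_reflTransGen]
  refine ⟨fun h => h.lift Subtype.val fun _ _ => id, fun h => ?_⟩
  obtain ⟨b, hb⟩ := b
  change Relation.ReflTransGen Y.Adj a b at h
  induction h with
  | refl => rfl
  | tail _ hcb ih => exact (ih (Y.edge_vert hcb)).tail hcb

theorem connected_iff_reflTransGen {Y : G.Subgraph} :
    Y.Connected ↔
      Y.verts.Nonempty ∧ ∀ a ∈ Y.verts, ∀ b ∈ Y.verts, Relation.ReflTransGen Y.Adj a b := by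
  rw [Subgraph.connected_iff, Subgraph.preconnected_iff, and_comm]
  refine and_congr_right fun _ => ⟨fun h a ha b hb => ?_, fun h a b => ?_⟩
  · exact reachable_coe_iff_reflTransGen.1 (h ⟨a, ha⟩ ⟨b, hb⟩)
  · exact reachable_coe_iff_reflTransGen.2 (h a a.2 b b.2)

theorem Connected.reflTransGen_adj {X : G.Subgraph} (hX : X.Connected) {a b : V}
    (ha : a ∈ X.verts) (hb : b ∈ X.verts) : Relation.ReflTransGen X.Adj a b :=
  (connected_iff_reflTransGen.1 hX).2 a ha b hb

theorem Connected.of_adj_reflTransGen {X Y : G.Subgraph} (hX : X.Connected)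
    (hXY : X.verts = Y.verts) (h : ∀ a b, X.Adj a b → Relation.ReflTransGen Y.Adj a b) :
    Y.Connected := by
  refine connected_iff_reflTransGen.2 ⟨hXY ▸ hX.nonempty, fun a ha b hb => ?_⟩
  rw [← hXY] at ha hb
  exact Relation.reflTransGen_closed h _ _ (hX.reflTransGen_adj ha hb)

theorem sgWeight_deleteEdges_sup_subgraphOfAdj [Fintype V] {α : Type*} [AddCommMonoid α]
    (X : G.Subgraph) (w : Sym2 V → α) {f : Sym2 V} (hf : f ∈ X.edgeSet) {a b : V}
    (hab : G.Adj a b) (habX : s(a, b) ∉ X.edgeSet) :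
    sgWeight (X.deleteEdges {f} ⊔ G.subgraphOfAdj hab) w + w f = sgWeight X w + w s(a, b) := by
  classical
  have hedges : (Set.toFinite (X.deleteEdges {f} ⊔ G.subgraphOfAdj hab).edgeSet).toFinset =
      insert s(a, b) ((Set.toFinite X.edgeSet).toFinset.erase f) := by
    ext e
    induction e using Sym2.ind
    simp only [Set.Finite.mem_toFinset, edgeSet_sup, edgeSet_subgraphOfAdj, Set.mem_union,
      Subgraph.mem_edgeSet, deleteEdges_adj, Set.mem_singleton_iff, Finset.mem_insert,
      Finset.mem_erase]
    tauto
  have habX' : s(a, b) ∉ (Set.toFinite X.edgeSet).toFinset.erase f := by simp [habX]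
  rw [sgWeight, hedges, Finset.sum_insert habX', sgWeight,
    ← Finset.add_sum_erase _ _ ((Set.toFinite X.edgeSet).mem_toFinset.2 hf)]
  abel

end SimpleGraph.Subgraph

open SimpleGraph.Subgraph in
theorem IsMST.reflTransGen_of_adj [Fintype V] {G : SimpleGraph V} {α : Type*}
    [AddCommMonoid α] [LinearOrder α] [IsOrderedCancelAddMonoid α] {w : Sym2 V → α}
    {X : G.Subgraph} (hX : IsMST X w) {lam : α} {a b : V} (hab : G.Adj a b)
    (hw : w s(a, b) < lam) :
    Relation.ReflTransGen (fun p q => X.Adj p q ∧ w s(p, q) < lam) a b := by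
  obtain ⟨hspan, hconn, hmin⟩ := hX
  by_contra hnot
  set S := {y | Relation.ReflTransGen (fun p q => X.Adj p q ∧ w s(p, q) < lam) a y}
  obtain ⟨u, v, hu, hv, huv, hvb⟩ :=
    (hconn.reflTransGen_adj (hspan ▸ Set.mem_univ a) (hspan ▸ Set.mem_univ b)).exists_last_exit
      (show a ∈ S from .refl) hnot
  have hheavy : lam ≤ w s(u, v) := not_lt.1 fun hlt => hv (hu.tail ⟨huv, hlt⟩)
  have habX : s(a, b) ∉ X.edgeSet := fun h => hnot (.single ⟨h, hw⟩)
  set Y := X.deleteEdges {s(u, v)} ⊔ G.subgraphOfAdj hab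
  have hvu : Relation.ReflTransGen Y.Adj v u := by
    have hvb' : Relation.ReflTransGen Y.Adj v b :=
      .mono (fun p q hpq => Or.inl ⟨hpq.1, fun h => by
        rcases Sym2.eq_iff.1 (Set.mem_singleton_iff.1 h) with ⟨rfl, -⟩ | ⟨-, rfl⟩
        exacts [hpq.2.1 hu, hpq.2.2 hu]⟩) _ _ hvb
    have hau : Relation.ReflTransGen Y.Adj a u :=
      .mono (fun p q hpq =>
        Or.inl ⟨hpq.1, fun h => (Set.mem_singleton_iff.1 h ▸ hpq.2).not_ge hheavy⟩) _ _ hu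
    exact (hvb'.tail (Or.inr (subgraphOfAdj_adj_self hab).symm)).trans hau
  have hYconn : Y.Connected := hconn.of_adj_reflTransGen (by simp [Y, hspan]) fun p q hpq => by
    by_cases he : s(p, q) = s(u, v)
    · rcases Sym2.eq_iff.1 he with ⟨rfl, rfl⟩ | ⟨rfl, rfl⟩
      · exact (@Relation.ReflTransGen.stdSymm _ _ Y.symm).symm _ _ hvu
      · exact hvu
    · exact .single (Or.inl ⟨hpq, he⟩)
  have hlt : sgWeight Y w < sgWeight X w := lt_of_add_lt_add_right
    ((sgWeight_deleteEdges_sup_subgraphOfAdj X w (f := s(u, v)) huv hab habX).trans_lt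
      (add_lt_add_right (hw.trans_le hheavy) _))
  exact (hmin Y (by simp [Y, hspan]) hYconn).not_gt hlt

theorem IsMST.reflTransGen_level_iff [Fintype V] {G : SimpleGraph V} {α : Type*}
    [AddCommMonoid α] [LinearOrder α] [IsOrderedCancelAddMonoid α] {w : Sym2 V → α}
    {X : G.Subgraph} (hX : IsMST X w) (lam : α) {x y : V} :
    Relation.ReflTransGen (fun a b => X.Adj a b ∧ w s(a, b) < lam) x y ↔
      Relation.ReflTransGen (fun a b => (⊤ : G.Subgraph).Adj a b ∧ w s(a, b) < lam) x y :=
  ⟨Relation.ReflTransGen.mono (fun _ _ h => ⟨X.adj_sub h.1, h.2⟩) _ _,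
    Relation.reflTransGen_closed (fun _ _ h => hX.reflTransGen_of_adj h.1 h.2) _ _⟩

theorem mst_levelPartition_eq_general [Fintype V] (G : SimpleGraph V)
    (w : Sym2 V → NNReal) (X : G.Subgraph) (hX : IsMST X w) :
    ∀ lam : NNReal, levelPartition X w lam = levelPartition (⊤ : G.Subgraph) w lam := by
  intro lam
  ext S
  simp only [levelPartition, hX.1, Subgraph.verts_top, hX.reflTransGen_level_iff]

/-- the level partitions, hence the quasi-flat zones hierarchies,
of a minimum spanning tree `X` and of `G` coincide. -/
theorem mst_levelPartition_eq [Fintype V] (G : SimpleGraph V) (hG : G.Connected)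
    (w : Sym2 V → NNReal) (X : G.Subgraph) (hX : IsMST X w) :
    ∀ lam : NNReal, levelPartition X w lam = levelPartition (⊤ : G.Subgraph) w lam :=
  mst_levelPartition_eq_general G w X hX
end

section
/- Let (G,w) be a finite connected edge-weighted graph and X a subgraph of G such that X is connected, V(X) = V(G), and X has a proper subgraph realizing the same quasi-flat zones hierarchy only if equal to X. If additionally the quasi-flat zones hierarchy of X equals that of G and X contains a cycle, then removing an edge of maximal weight on that cycle yields a connected spanning subgraph with the same quasi-flat zones hierarchy; hence any minimal subgraph solving problem (P₃) is a spanning tree. -/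
open SimpleGraph

variable {V : Type*}

/-!
Deleting an edge `e` of maximal weight on a cycle changes no level partition: below level
`w e` the edge is absent from the level graph anyway, and above it the rest of the cycle still
joins the ends of `e` by lighter edges. Hence a minimal subgraph with the hierarchy of `G` is
acyclic. Conversely, at a level above all weights of a path of `G`, sharing the partition of
`G` puts both ends of the path in one component of the subgraph, so such a subgraph is
connected and spanning.
-/

namespace SimpleGraph

variable {G : SimpleGraph V} {α : Type*}

lemma reachable_deleteEdges_of_mem_edges_of_isCycle {u a b : V} {c : G.Walk u u}
    (hc : c.IsCycle) (hab : s(a, b) ∈ c.edges) :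
    ((fromEdgeSet {f | f ∈ c.edges}).deleteEdges {s(a, b)}).Reachable a b := by
  let c' := c.transfer (fromEdgeSet {f | f ∈ c.edges}) fun f hf => by
    rw [edgeSet_fromEdgeSet]
    exact ⟨hf, G.not_isDiag_of_mem_edgeSet (c.edges_subset_edgeSet hf)⟩
  refine (adj_and_reachable_delete_edges_iff_exists_cycle.mpr ⟨u, c', hc.transfer _, ?_⟩).2
  rwa [Walk.edges_transfer]

namespace Subgraph

lemma exists_reachable_coe_of_reachable_spanningCoe {X : G.Subgraph} {u v : V}
    (h : X.spanningCoe.Reachable u v) (hu : u ∈ X.verts) :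
    ∃ hv : v ∈ X.verts, X.coe.Reachable ⟨u, hu⟩ ⟨v, hv⟩ := by
  rw [reachable_iff_reflTransGen] at h
  induction h with
  | refl => exact ⟨hu, .rfl⟩
  | tail _ hadj ih =>
    obtain ⟨_, hr⟩ := ih
    exact ⟨hadj.snd_mem, hr.trans (Adj.reachable (G := X.coe) hadj)⟩

section Level

variable [LT α]

def levelGraph (X : G.Subgraph) (w : Sym2 V → α) (lam : α) : SimpleGraph V where
  Adj a b := X.Adj a b ∧ w s(a, b) < lam
  symm := ⟨fun _ _ h => ⟨h.1.symm, Sym2.eq_swap ▸ h.2⟩⟩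
  loopless := ⟨fun _ h => h.1.ne rfl⟩

lemma levelGraph_le_spanningCoe (X : G.Subgraph) (w : Sym2 V → α) (lam : α) :
    X.levelGraph w lam ≤ X.spanningCoe :=
  fun _ _ h => h.1

lemma levelGraph_mono {X Y : G.Subgraph} (hXY : X ≤ Y) (w : Sym2 V → α) (lam : α) :
    X.levelGraph w lam ≤ Y.levelGraph w lam :=
  fun _ _ h => ⟨hXY.2 h.1, h.2⟩

lemma mem_levelPartition {X : G.Subgraph} {w : Sym2 V → α} {lam : α} {S : Set V} :
    S ∈ levelPartition X w lam ↔
      ∃ x ∈ X.verts, S = {y | (X.levelGraph w lam).Reachable x y} := by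
  simp only [levelPartition, reachable_iff_reflTransGen]
  rfl

lemma sameRegion_levelPartition_iff {X : G.Subgraph} {w : Sym2 V → α} {lam : α} {x y : V} :
    SameRegion (levelPartition X w lam) x y ↔
      x ∈ X.verts ∧ (X.levelGraph w lam).Reachable x y := by
  constructor
  · rintro ⟨R, hR, hx, hy⟩
    obtain ⟨z, hz, rfl⟩ := mem_levelPartition.mp hR
    exact ⟨(exists_reachable_coe_of_reachable_spanningCoe
      (hx.mono (levelGraph_le_spanningCoe X w lam)) hz).1, hx.symm.trans hy⟩
  · rintro ⟨hx, hxy⟩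
    exact ⟨_, mem_levelPartition.mpr ⟨x, hx, rfl⟩, Reachable.rfl, hxy⟩

lemma levelPartition_congr {X Y : G.Subgraph} {w : Sym2 V → α} {lam : α}
    (hverts : X.verts = Y.verts)
    (hreach : (X.levelGraph w lam).Reachable = (Y.levelGraph w lam).Reachable) :
    levelPartition X w lam = levelPartition Y w lam := by
  ext S
  simp only [mem_levelPartition, hverts, hreach]

end Level

lemma exists_reachable_coe_of_forall_levelPartition_eq_top [Preorder α] [IsDirectedOrder α]
    [NoMaxOrder α] (hG : G.Connected) {Y : G.Subgraph} {w : Sym2 V → α}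
    (h : ∀ lam, levelPartition Y w lam = levelPartition (⊤ : G.Subgraph) w lam) (x y : V) :
    ∃ (hx : x ∈ Y.verts) (hy : y ∈ Y.verts), Y.coe.Reachable ⟨x, hx⟩ ⟨y, hy⟩ := by
  classical
  obtain ⟨p⟩ := hG.preconnected x y
  have : Nonempty α := ⟨w s(x, y)⟩
  obtain ⟨M, hM⟩ := (p.edges.toFinset.image w).exists_le
  obtain ⟨lam, hlam⟩ := exists_gt M
  have hp : ((⊤ : G.Subgraph).levelGraph w lam).Reachable x y :=
    (p.transfer _ <| Sym2.ind fun a b hab =>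
      ⟨p.adj_of_mem_edges hab,
        (hM _ (Finset.mem_image_of_mem w (List.mem_toFinset.mpr hab))).trans_lt hlam⟩).reachable
  have hY := sameRegion_levelPartition_iff.mp <| h lam ▸
    sameRegion_levelPartition_iff.mpr ⟨Set.mem_univ x, hp⟩
  obtain ⟨hy, hxy⟩ := exists_reachable_coe_of_reachable_spanningCoe
    (hY.2.mono (levelGraph_le_spanningCoe Y w lam)) hY.1
  exact ⟨hY.1, hy, hxy⟩

lemma connected_and_verts_eq_univ_of_forall_levelPartition_eq_top [Preorder α]
    [IsDirectedOrder α] [NoMaxOrder α] (hG : G.Connected) {Y : G.Subgraph} {w : Sym2 V → α}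
    (h : ∀ lam, levelPartition Y w lam = levelPartition (⊤ : G.Subgraph) w lam) :
    Y.Connected ∧ Y.verts = Set.univ := by
  have hreach := exists_reachable_coe_of_forall_levelPartition_eq_top hG h
  have hverts : Y.verts = Set.univ := Set.eq_univ_of_forall fun x => (hreach x x).1
  refine ⟨Subgraph.connected_iff.mpr ⟨⟨fun ⟨x, _⟩ ⟨y, _⟩ => ?_⟩, ?_⟩, hverts⟩
  · exact (hreach x y).2.2
  · obtain ⟨x⟩ := hG.nonempty
    exact ⟨x, (hreach x x).1⟩

section Cycle

variable [Preorder α]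

lemma reachable_levelGraph_deleteEdges_of_isCycle {X : G.Subgraph} {w : Sym2 V → α} {v : V}
    {c : X.spanningCoe.Walk v v} (hc : c.IsCycle) {e : Sym2 V} (he : e ∈ c.edges)
    (hmax : ∀ f ∈ c.edges, w f ≤ w e) (lam : α) :
    ((X.deleteEdges {e}).levelGraph w lam).Reachable = (X.levelGraph w lam).Reachable := by
  refine le_antisymm (Reachable.mono' (levelGraph_mono (deleteEdges_le _) w lam)) ?_
  rw [reachable_eq_reflTransGen, reachable_eq_reflTransGen]
  refine Relation.reflTransGen_closed fun a b hab => ?_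
  rw [← reachable_eq_reflTransGen]
  by_cases hab_eq : s(a, b) = e
  · subst hab_eq
    -- The rest of the cycle joins `a` to `b` through edges no heavier than `s(a, b)`.
    refine (reachable_deleteEdges_of_mem_edges_of_isCycle hc he).mono ?_
    intro u u' huu'
    rw [SimpleGraph.deleteEdges_adj, fromEdgeSet_adj] at huu'
    obtain ⟨⟨hmem, -⟩, hne⟩ := huu'
    exact ⟨(deleteEdges_adj _ _ _).mpr ⟨c.adj_of_mem_edges hmem, hne⟩,
      (hmax _ hmem).trans_lt hab.2⟩
  · exact Adj.reachable ⟨(deleteEdges_adj _ _ _).mpr ⟨hab.1, hab_eq⟩, hab.2⟩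

lemma levelPartition_deleteEdges_of_isCycle {X : G.Subgraph} {w : Sym2 V → α} {v : V}
    {c : X.spanningCoe.Walk v v} (hc : c.IsCycle) {e : Sym2 V} (he : e ∈ c.edges)
    (hmax : ∀ f ∈ c.edges, w f ≤ w e) (lam : α) :
    levelPartition (X.deleteEdges {e}) w lam = levelPartition X w lam :=
  levelPartition_congr (deleteEdges_verts _)
    (reachable_levelGraph_deleteEdges_of_isCycle hc he hmax lam)

end Cycle

lemma isAcyclic_spanningCoe_of_minimal [LinearOrder α] {X : G.Subgraph} {w : Sym2 V → α}
    (hmin : ∀ Y ≤ X, (∀ lam, levelPartition Y w lam = levelPartition X w lam) → Y = X) :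
    X.spanningCoe.IsAcyclic := by
  classical
  intro v c hc
  have hne : c.edges.toFinset.Nonempty :=
    List.toFinset_nonempty_iff _ |>.mpr (mt Walk.edges_eq_nil.mp hc.not_nil)
  obtain ⟨e, he, hmax⟩ := c.edges.toFinset.exists_max_image w hne
  rw [List.mem_toFinset] at he
  have hdel := hmin _ (deleteEdges_le _) <| levelPartition_deleteEdges_of_isCycle hc he
    fun f hf => hmax f (List.mem_toFinset.mpr hf)
  have he' := c.edges_subset_edgeSet he
  rw [← hdel, ← deleteEdges_spanningCoe_eq, edgeSet_deleteEdges] at he'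
  exact he'.2 rfl

end Subgraph

end SimpleGraph

theorem minimal_qfz_is_spanning_tree_general (G : SimpleGraph V)
    (hG : G.Connected) (w : Sym2 V → NNReal) :
    (∀ X : G.Subgraph, X.Connected → X.verts = Set.univ →
      (∀ lam : NNReal, levelPartition X w lam = levelPartition (⊤ : G.Subgraph) w lam) →
      ∀ (v : V) (c : X.spanningCoe.Walk v v), c.IsCycle →
        ∀ e ∈ c.edges, (∀ e' ∈ c.edges, w e' ≤ w e) →
          (X.deleteEdges {e}).Connected ∧ (X.deleteEdges {e}).verts = Set.univ ∧
          ∀ lam : NNReal,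
            levelPartition (X.deleteEdges {e}) w lam =
              levelPartition (⊤ : G.Subgraph) w lam) ∧
    (∀ X : G.Subgraph,
      (∀ lam : NNReal, levelPartition X w lam = levelPartition (⊤ : G.Subgraph) w lam) →
      (∀ Y : G.Subgraph, Y ≤ X →
        (∀ lam : NNReal, levelPartition Y w lam = levelPartition (⊤ : G.Subgraph) w lam) →
        Y = X) →
      X.Connected ∧ X.verts = Set.univ ∧ X.spanningCoe.IsAcyclic) := by
  refine ⟨fun X _ _ hX v c hc e he hmax => ?_, fun X hX hmin => ?_⟩
  · have hdel : ∀ lam : NNReal,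
        levelPartition (X.deleteEdges {e}) w lam = levelPartition (⊤ : G.Subgraph) w lam :=
      fun lam => (Subgraph.levelPartition_deleteEdges_of_isCycle hc he hmax lam).trans (hX lam)
    obtain ⟨hconn, hverts⟩ :=
      Subgraph.connected_and_verts_eq_univ_of_forall_levelPartition_eq_top hG hdel
    exact ⟨hconn, hverts, hdel⟩
  · obtain ⟨hconn, hverts⟩ :=
      Subgraph.connected_and_verts_eq_univ_of_forall_levelPartition_eq_top hG hX
    exact ⟨hconn, hverts, Subgraph.isAcyclic_spanningCoe_of_minimal (w := w)
      fun Y hYX hY => hmin Y hYX fun lam => (hY lam).trans (hX lam)⟩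

/-- removing a maximal-weight edge of a cycle of a connected spanning
subgraph with the same quasi-flat zones hierarchy as `G` keeps it connected, spanning,
and with the same quasi-flat zones hierarchy; hence any minimal subgraph solving
problem (P₃) is a spanning tree. -/
theorem minimal_qfz_is_spanning_tree [Fintype V] (G : SimpleGraph V)
    (hG : G.Connected) (w : Sym2 V → NNReal) :
    (∀ X : G.Subgraph, X.Connected → X.verts = Set.univ →
      (∀ lam : NNReal, levelPartition X w lam = levelPartition (⊤ : G.Subgraph) w lam) →
      ∀ (v : V) (c : X.spanningCoe.Walk v v), c.IsCycle →
        ∀ e ∈ c.edges, (∀ e' ∈ c.edges, w e' ≤ w e) →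
          (X.deleteEdges {e}).Connected ∧ (X.deleteEdges {e}).verts = Set.univ ∧
          ∀ lam : NNReal,
            levelPartition (X.deleteEdges {e}) w lam =
              levelPartition (⊤ : G.Subgraph) w lam) ∧
    (∀ X : G.Subgraph,
      (∀ lam : NNReal, levelPartition X w lam = levelPartition (⊤ : G.Subgraph) w lam) →
      (∀ Y : G.Subgraph, Y ≤ X →
        (∀ lam : NNReal, levelPartition Y w lam = levelPartition (⊤ : G.Subgraph) w lam) →
        Y = X) →
      X.Connected ∧ X.verts = Set.univ ∧ X.spanningCoe.IsAcyclic) :=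
  minimal_qfz_is_spanning_tree_general G hG w
end

section
/- Let G = (V,E) be the complete graph on a finite set V and let w be a saliency map on G (extended to a function d on pairs by d(x,y) = w({x,y}) + 1 for x ≠ y and d(x,x) = 0). Then d is an ultrametric on V: d(x,z) ≤ max(d(x,y), d(y,z)) for all x, y, z. -/
open SimpleGraph

variable {V : Type*}

lemma sameRegion_mono_s16 {P : ℕ → Set (Set V)} {l : ℕ} (hH : IsCompleteHierarchy P l)
    {i j : ℕ} (hij : i ≤ j) (hj : j ≤ l) {x y : V} (h : SameRegion (P i) x y) :
    SameRegion (P j) x y := by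
  induction j with
  | zero => interval_cases i; exact h
  | succ j ih =>
    rcases Nat.eq_or_lt_of_le hij with rfl | hlt
    · exact h
    · obtain ⟨R, hR, hx, hy⟩ := ih (by omega) (by omega)
      obtain ⟨S, hS, hRS⟩ := hH.2.1 (j + 1) (by omega) hj R hR
      exact ⟨S, hS, hRS hx, hRS hy⟩

lemma sameRegion_trans {P : Set (Set V)} (hP : Setoid.IsPartition P) {x y z : V}
    (h1 : SameRegion P x y) (h2 : SameRegion P y z) : SameRegion P x z := by
  obtain ⟨R, hR, hx, hy⟩ := h1
  obtain ⟨R', hR', hy', hz⟩ := h2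
  obtain ⟨B, -, hBu⟩ := hP.2 y
  have : R = R' := ((hBu R ⟨hR, hy⟩).trans (hBu R' ⟨hR', hy'⟩).symm)
  exact ⟨R, hR, hx, this ▸ hz⟩

/-- on the complete graph, a saliency map extended by
`d x y = w {x, y} + 1` (and `d x x = 0`) is an ultrametric. -/
theorem saliency_complete_is_ultrametric [Fintype V] [DecidableEq V] (w : Sym2 V → ℕ)
    (hw : ∃ (P : ℕ → Set (Set V)) (l : ℕ), IsCompleteHierarchy P l ∧
      ∀ e ∈ (⊤ : SimpleGraph V).edgeSet, w e = saliency (⊤ : SimpleGraph V) P l e)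
    (d : V → V → ℕ) (hd : ∀ x y : V, d x y = if x = y then 0 else w s(x, y) + 1) :
    ∀ x y z : V, d x z ≤ max (d x y) (d y z) := by
  obtain ⟨P, l, hH, hwP⟩ := hw
  have key : ∀ x y : V, x ≠ y →
      (¬ SameRegion (P (w s(x, y))) x y) ∧ SameRegion (P (w s(x, y) + 1)) x y ∧
        w s(x, y) + 1 ≤ l := by
    intro x y hxy
    have hedge : s(x, y) ∈ (⊤ : SimpleGraph V).edgeSet := by simp [hxy]
    have hcut : ∀ lam, s(x, y) ∈ cutOf ⊤ (P lam) ↔ ¬ SameRegion (P lam) x y := by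
      intro lam
      constructor
      · rintro ⟨-, h⟩; exact h x y rfl
      · intro h
        refine ⟨hedge, ?_⟩
        intro a b hab
        rw [Sym2.eq_iff] at hab
        rcases hab with ⟨rfl, rfl⟩ | ⟨rfl, rfl⟩
        · exact h
        · exact fun hs => h (sameRegion_symm hs)
    set S := {lam | lam ≤ l ∧ s(x, y) ∈ cutOf ⊤ (P lam)} with hS
    have hwe : w s(x, y) = sSup S := hwP _ hedge
    have h0 : ¬ SameRegion (P 0) x y := by
      rintro ⟨R, hR, hx, hy⟩
      rw [hH.2.2.1] at hR
      obtain ⟨a, rfl⟩ := hR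
      simp only [Set.mem_singleton_iff] at hx hy
      exact hxy (hx.trans hy.symm)
    have hlS : SameRegion (P l) x y :=
      ⟨Set.univ, by rw [hH.2.2.2]; simp, trivial, trivial⟩
    have h0S : 0 ∈ S := ⟨Nat.zero_le l, (hcut 0).2 h0⟩
    have hbdd : BddAbove S := ⟨l, fun a ha => ha.1⟩
    have hmem : sSup S ∈ S := Nat.sSup_mem ⟨0, h0S⟩ hbdd
    have hne : sSup S ≠ l := fun h => ((hcut l).1 (h ▸ hmem.2)) hlS
    have hlt : sSup S + 1 ≤ l := by have := hmem.1; omega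
    have hnot : ¬ SameRegion (P (sSup S)) x y := (hcut _).1 hmem.2
    have hsucc : SameRegion (P (sSup S + 1)) x y := by
      by_contra h
      have hmem2 : sSup S + 1 ∈ S := ⟨hlt, (hcut _).2 h⟩
      have := le_csSup hbdd hmem2
      omega
    rw [hwe]
    exact ⟨hnot, hsucc, hlt⟩
  intro x y z
  by_cases hxz : x = z
  · simp [hd, hxz]
  by_cases hxy : x = y
  · subst hxy; simp [hd]
  by_cases hyz : y = z
  · subst hyz; simp [hd]
  obtain ⟨-, hxy1, hxyl⟩ := key x y hxy
  obtain ⟨-, hyz1, hyzl⟩ := key y z hyz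
  set lam := max (w s(x, y) + 1) (w s(y, z) + 1) with hlam
  have hlaml : lam ≤ l := by omega
  have h1 : SameRegion (P lam) x y := sameRegion_mono_s16 hH (le_max_left _ _) hlaml hxy1
  have h2 : SameRegion (P lam) y z := sameRegion_mono_s16 hH (le_max_right _ _) hlaml hyz1
  have h3 : SameRegion (P lam) x z := sameRegion_trans (hH.1 lam hlaml) h1 h2
  obtain ⟨hxz0, -, hxzl⟩ := key x z hxz
  have hle : w s(x, z) + 1 ≤ lam := by
    by_contra h
    push_neg at h
    exact hxz0 (sameRegion_mono_s16 hH (by omega) (by omega) h3)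
  rw [hd x z, hd x y, hd y z]
  simp only [hxz, hxy, hyz, if_false]
  omega
end
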